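/- arXiv:2508.11727 — 2 statements merged into one kernel-verified Lean document; each statement's English description precedes it below -/
import Mathlib

section
/- Let m ≥ 1, let w ∈ ℝ^m be a nonzero vector, and let a₁, a₂ ∈ ℝ with (a₁, a₂) ≠ (0, 0). Define the real matrix E with 2(m+1) rows indexed by pairs (i, j) with i ∈ {1, 2} and j ∈ {0, 1, …, m}, and 3m columns indexed by pairs (b, k) with b ∈ {0, 1, 2} and k ∈ {1, …, m}, by: E[(i,0),(0,k)] = a_i · w_k for all k; E[(i,0),(i,k)] = 1 for all k; E[(i,j),(i,j)] = 1 for 1 ≤ j ≤ m; and all other entries equal to 0. Then rank(E) = 2m + 1. -/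
open Matrix Submodule Module

private def EmatAux (m : ℕ) (w : Fin m → ℝ) (a : Fin 2 → ℝ) :
    Matrix (Fin 2 × Fin (m + 1)) (Fin 3 × Fin m) ℝ :=
  Matrix.of fun r c =>
    if (r.2 : ℕ) = 0 then
      (if (c.1 : ℕ) = 0 then a r.1 * w c.2
       else if (c.1 : ℕ) = (r.1 : ℕ) + 1 then (1 : ℝ) else 0)
    else
      (if (c.1 : ℕ) = (r.1 : ℕ) + 1 ∧ (c.2 : ℕ) + 1 = (r.2 : ℕ) then (1 : ℝ) else 0)

private def famAux (m : ℕ) (a : Fin 2 → ℝ) :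
    (Fin 2 × Fin m) ⊕ Unit → (Fin 2 × Fin (m + 1) → ℝ)
  | .inl p => fun r =>
      (if r = (p.1, 0) then (1 : ℝ) else 0) + (if r = (p.1, p.2.succ) then 1 else 0)
  | .inr _ => fun r => if (r.2 : ℕ) = 0 then a r.1 else 0

private lemma col0Aux (m : ℕ) (w : Fin m → ℝ) (a : Fin 2 → ℝ)
    (c : Fin 3 × Fin m) (hc : (c.1 : ℕ) = 0) :
    (EmatAux m w a)ᵀ c = w c.2 • famAux m a (.inr ()) := by
  funext r
  obtain ⟨ri, rj⟩ := r
  rcases Fin.eq_zero_or_eq_succ rj with h | ⟨j, rfl⟩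
  · subst h
    simp [EmatAux, famAux, hc, mul_comm, show c.1 = 0 from Fin.ext hc]
  · simp [EmatAux, famAux, hc, Fin.val_succ]

private lemma colsuccAux (m : ℕ) (w : Fin m → ℝ) (a : Fin 2 → ℝ)
    (c : Fin 3 × Fin m) (i : Fin 2) (hc : (c.1 : ℕ) = (i : ℕ) + 1) :
    (EmatAux m w a)ᵀ c = famAux m a (.inl (i, c.2)) := by
  funext r
  obtain ⟨ri, rj⟩ := r
  rcases Fin.eq_zero_or_eq_succ rj with h | ⟨j, rfl⟩
  · subst h
    simp only [EmatAux, famAux, transpose_apply, of_apply, Fin.val_zero, if_true, hc]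
    have h2 : ¬ ((ri, (0 : Fin (m+1))) = (i, Fin.succ c.2)) := by
      simp [Prod.ext_iff, Fin.ext_iff]
    by_cases hri : ri = i
    · subst hri; simp [h2]
    · have hne : ¬ ((i : ℕ) + 1 = (ri : ℕ) + 1) := by
        simp [Fin.ext_iff] at hri ⊢; omega
      simp [hne, h2, Prod.ext_iff, hri]; omega
  · simp only [EmatAux, famAux, transpose_apply, of_apply, Fin.val_succ, hc]
    have h2 : ¬ ((ri, Fin.succ j) = (i, (0 : Fin (m+1)))) := by
      simp [Prod.ext_iff, Fin.ext_iff]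
    rw [if_neg (by omega : ¬ ((j : ℕ) + 1 = 0))]
    simp only [h2, if_false, zero_add]
    by_cases h : (i : ℕ) + 1 = (ri : ℕ) + 1 ∧ (c.2 : ℕ) + 1 = (j : ℕ) + 1
    · rw [if_pos h, if_pos (by simp [Prod.ext_iff, Fin.ext_iff]; omega :
        (ri, Fin.succ j) = (i, Fin.succ c.2))]
    · rw [if_neg h, eq_comm, if_neg]
      intro heq
      apply h
      simp [Prod.ext_iff, Fin.ext_iff] at heq
      omega

private lemma famIndepAux (m : ℕ) (a : Fin 2 → ℝ) (ha : a ≠ 0) :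
    LinearIndependent ℝ (famAux m a) := by
  rw [Fintype.linearIndependent_iff]
  intro g hg
  have H' : ∀ r, (∑ s, g s * famAux m a s r) = 0 := by
    intro r
    have : (∑ s, g s • famAux m a s) r = 0 := by rw [hg]; rfl
    rw [← this]; simp [Finset.sum_apply]
  have hinl : ∀ p : Fin 2 × Fin m, g (.inl p) = 0 := by
    intro p
    have := H' (p.1, p.2.succ)
    rw [Fintype.sum_sum_type] at this
    simp only [famAux] at this
    have h0 : ∀ q : Fin 2 × Fin m, ((p.1, Fin.succ p.2) = (q.1, (0 : Fin (m+1)))) ↔ False := by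
      simp [Prod.ext_iff, Fin.ext_iff]
    have h1 : ∀ q : Fin 2 × Fin m, ((p.1, Fin.succ p.2) = (q.1, Fin.succ q.2)) ↔ q = p := by
      intro q
      simp only [Prod.ext_iff, Fin.ext_iff, Fin.val_succ]
      omega
    simp only [h0, h1, if_false, zero_add, mul_ite, mul_one, mul_zero,
      Finset.sum_ite_eq', Finset.mem_univ, if_true, Fin.val_succ, Nat.succ_ne_zero,
      Finset.sum_const_zero, add_zero] at this
    simpa using this
  rintro (p | ⟨⟩)
  · exact hinl p
  · obtain ⟨i0, hi0⟩ : ∃ i, a i ≠ 0 := by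
      by_contra h; push_neg at h; exact ha (funext fun i => h i)
    have := H' (i0, 0)
    rw [Fintype.sum_sum_type] at this
    simp only [famAux, hinl, zero_mul, Finset.sum_const_zero, zero_add] at this
    simp only [Fin.val_zero, if_true, Finset.univ_unique, Finset.sum_singleton] at this
    have h2 : g (Sum.inr ()) * a i0 = 0 := by simpa using this
    rcases mul_eq_zero.mp h2 with h | h
    · exact h
    · exact absurd h hi0

/-- The coefficient matrix of two self-looped observed subprocesses regressed on the `m`
lagged variables of a shared latent confounder (column block `0`) and on their own `m`
lagged variables (column blocks `1` and `2`), under a separable excitation function,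
has rank `2m + 1`.

Rows are indexed by `(i, j)` with `i ∈ Fin 2` (the subprocess) and `j ∈ Fin (m+1)`
(the lag of the variable, `j = 0` being the current variable); columns are indexed by
`(b, k)` with `b ∈ Fin 3` (the block) and `k ∈ Fin m` (`k` coding lag `k + 1`). -/
theorem rank_self_loop_latent_confounder_coefficient_matrix
    (m : ℕ) (hm : 1 ≤ m)
    (w : Fin m → ℝ) (hw : w ≠ 0)
    (a : Fin 2 → ℝ) (ha : a ≠ 0) :
    (Matrix.of fun (r : Fin 2 × Fin (m + 1)) (c : Fin 3 × Fin m) =>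
        if (r.2 : ℕ) = 0 then
          (if (c.1 : ℕ) = 0 then a r.1 * w c.2
           else if (c.1 : ℕ) = (r.1 : ℕ) + 1 then (1 : ℝ) else 0)
        else
          (if (c.1 : ℕ) = (r.1 : ℕ) + 1 ∧ (c.2 : ℕ) + 1 = (r.2 : ℕ) then (1 : ℝ)
           else 0)).rank = 2 * m + 1 := by
  show (EmatAux m w a).rank = 2 * m + 1
  obtain ⟨k0, hk0⟩ : ∃ k, w k ≠ 0 := by
    by_contra h; push_neg at h; exact hw (funext fun k => h k)
  rw [Matrix.rank_eq_finrank_span_cols]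
  have hspan : span ℝ (Set.range (EmatAux m w a)ᵀ) = span ℝ (Set.range (famAux m a)) := by
    apply le_antisymm
    · rw [span_le]
      rintro _ ⟨⟨⟨bv, hb⟩, k⟩, rfl⟩
      interval_cases bv
      · rw [col0Aux m w a _ rfl]
        exact smul_mem _ _ (subset_span ⟨.inr (), rfl⟩)
      · rw [colsuccAux m w a _ 0 rfl]
        exact subset_span ⟨.inl (0, k), rfl⟩
      · rw [colsuccAux m w a _ 1 rfl]
        exact subset_span ⟨.inl (1, k), rfl⟩
    · rw [span_le]
      rintro _ ⟨(⟨i, k⟩ | ⟨⟩), rfl⟩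
      · rw [← colsuccAux m w a (i.succ, k) i (by simp)]
        exact subset_span ⟨(i.succ, k), rfl⟩
      · have h3 : famAux m a (.inr ()) = (w k0)⁻¹ • (EmatAux m w a)ᵀ ((0 : Fin 3), k0) := by
          rw [col0Aux m w a ((0 : Fin 3), k0) rfl, smul_smul, inv_mul_cancel₀ hk0, one_smul]
        rw [h3]
        exact smul_mem _ _ (subset_span ⟨((0 : Fin 3), k0), rfl⟩)
  rw [show (EmatAux m w a).col = (EmatAux m w a)ᵀ from rfl, hspan, finrank_span_eq_card (famIndepAux m a ha)]
  simp only [Fintype.card_sum, Fintype.card_prod, Fintype.card_fin, Fintype.card_unit]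
end

section
/- Let (Ω, μ) be a probability space and let X_A : Ω → ℝ^{n_A}, X_B : Ω → ℝ^{n_B}, X_C : Ω → ℝ^{n_C} be random vectors whose coordinates are all square-integrable. For random vectors U, V let Σ_{U,V} denote their cross-covariance matrix, with entries Cov(U_i, V_j). Assume the covariance matrix Σ_{C,C} of X_C is positive definite. Let M be the (n_A + n_C) × (n_B + n_C) cross-covariance matrix between the concatenated vector (X_A, X_C) and the concatenated vector (X_B, X_C), i.e. the block matrix [[Σ_{A,B}, Σ_{A,C}], [Σ_{C,B}, Σ_{C,C}]]. Then rank(M) = n_C if and only if Σ_{A,B} = Σ_{A,C} Σ_{C,C}⁻¹ Σ_{C,B}; moreover rank(M) ≥ n_C always holds. -/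
open MeasureTheory

/-- The cross-covariance matrix of two random vectors: entry `(i, j)` is
`Cov(X_i, Y_j) = E[X_i Y_j] − E[X_i] E[Y_j]`. -/
noncomputable def crossCov {Ω : Type*} [MeasurableSpace Ω] (μ : Measure Ω)
    {p q : ℕ} (X : Ω → Fin p → ℝ) (Y : Ω → Fin q → ℝ) :
    Matrix (Fin p) (Fin q) ℝ :=
  Matrix.of fun i j =>
    (∫ ω, X ω i * Y ω j ∂μ) - (∫ ω, X ω i ∂μ) * (∫ ω, Y ω j ∂μ)


lemma myRangeProdMap {R M N M' N' : Type*} [CommRing R]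
    [AddCommGroup M] [AddCommGroup N] [AddCommGroup M'] [AddCommGroup N']
    [Module R M] [Module R N] [Module R M'] [Module R N']
    (f : M →ₗ[R] M') (g : N →ₗ[R] N') :
    LinearMap.range (f.prodMap g) = (LinearMap.range f).prod (LinearMap.range g) := by
  ext ⟨a, b⟩
  constructor
  · rintro ⟨⟨x, y⟩, h⟩
    rw [LinearMap.prodMap_apply, Prod.mk.injEq] at h
    exact ⟨⟨x, h.1⟩, ⟨y, h.2⟩⟩
  · rintro ⟨⟨x, hx⟩, ⟨y, hy⟩⟩
    exact ⟨(x, y), Prod.ext hx hy⟩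

lemma myFinrankProd {M N : Type*} [AddCommGroup M] [AddCommGroup N]
    [Module ℝ M] [Module ℝ N] [FiniteDimensional ℝ M] [FiniteDimensional ℝ N]
    (p : Submodule ℝ M) (q : Submodule ℝ N) :
    Module.finrank ℝ (p.prod q) = Module.finrank ℝ p + Module.finrank ℝ q := by
  let e : (p.prod q) ≃ₗ[ℝ] p × q :=
    { toFun := fun x => (⟨x.1.1, x.2.1⟩, ⟨x.1.2, x.2.2⟩)
      invFun := fun x => ⟨(x.1.1, x.2.1), ⟨x.1.2, x.2.2⟩⟩
      map_add' := fun _ _ => rfl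
      map_smul' := fun _ _ => rfl
      left_inv := fun _ => rfl
      right_inv := fun _ => rfl }
  rw [e.finrank_eq, Module.finrank_prod]

lemma myRankFromBlocksDiag {m n p q : ℕ}
    (A : Matrix (Fin m) (Fin n) ℝ) (D : Matrix (Fin p) (Fin q) ℝ) :
    (Matrix.fromBlocks A 0 0 D).rank = A.rank + D.rank := by
  set e₁ := LinearEquiv.sumArrowLequivProdArrow (Fin n) (Fin q) ℝ ℝ
  set e₂ := LinearEquiv.sumArrowLequivProdArrow (Fin m) (Fin p) ℝ ℝ
  have key : (Matrix.fromBlocks A 0 0 D).mulVecLin =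
      (e₂.symm.toLinearMap ∘ₗ (A.mulVecLin.prodMap D.mulVecLin)) ∘ₗ e₁.toLinearMap := by
    apply LinearMap.ext
    intro v
    have hv : v = Sum.elim (v ∘ Sum.inl) (v ∘ Sum.inr) := (Sum.elim_comp_inl_inr v).symm
    funext i
    cases i with
    | inl i =>
      simp [Matrix.mulVecLin_apply, e₁, e₂, LinearEquiv.sumArrowLequivProdArrow]
      rw [hv, Matrix.fromBlocks_mulVec]
      simp [Equiv.sumArrowEquivProdArrow]
    | inr i =>
      simp [Matrix.mulVecLin_apply, e₁, e₂, LinearEquiv.sumArrowLequivProdArrow]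
      rw [hv, Matrix.fromBlocks_mulVec]
      simp [Equiv.sumArrowEquivProdArrow]
  rw [Matrix.rank, key, LinearMap.range_comp, LinearEquiv.range, Submodule.map_top,
    LinearMap.range_comp, LinearEquiv.finrank_map_eq, myRangeProdMap, myFinrankProd]
  rfl

theorem myRankBlockAux {nA nB nC : ℕ}
    (P : Matrix (Fin nA) (Fin nB) ℝ) (Q : Matrix (Fin nA) (Fin nC) ℝ)
    (Rm : Matrix (Fin nC) (Fin nB) ℝ) (S : Matrix (Fin nC) (Fin nC) ℝ)
    (hCC : S.PosDef) :
    ((Matrix.fromBlocks P Q Rm S).rank = nC ↔ P = Q * S⁻¹ * Rm) ∧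
    nC ≤ (Matrix.fromBlocks P Q Rm S).rank := by
  classical
  have hdet : IsUnit S.det := isUnit_iff_ne_zero.mpr hCC.det_pos.ne'
  haveI : Invertible S := S.invertibleOfIsUnitDet hdet
  have hSinv : ⅟S = S⁻¹ := Matrix.invOf_eq_nonsing_inv S
  have hM := Matrix.fromBlocks_eq_of_invertible₂₂ P Q Rm S
  have h1 : IsUnit (Matrix.fromBlocks (1 : Matrix (Fin nA) (Fin nA) ℝ) (Q * ⅟S) (0 : Matrix (Fin nC) (Fin nA) ℝ) 1).det := by
    rw [Matrix.det_fromBlocks_zero₂₁]; simp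
  have h2 : IsUnit (Matrix.fromBlocks (1 : Matrix (Fin nB) (Fin nB) ℝ) (0 : Matrix (Fin nB) (Fin nC) ℝ) (⅟S * Rm) 1).det := by
    rw [Matrix.det_fromBlocks_zero₁₂]; simp
  have hrank : (Matrix.fromBlocks P Q Rm S).rank = (P - Q * ⅟S * Rm).rank + nC := by
    rw [hM, Matrix.rank_mul_eq_left_of_isUnit_det _ _ h2,
      Matrix.rank_mul_eq_right_of_isUnit_det _ _ h1, myRankFromBlocksDiag,
      Matrix.rank_of_isUnit S ((Matrix.isUnit_iff_isUnit_det S).mpr hdet), Fintype.card_fin]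
  constructor
  · rw [hrank]
    constructor
    · intro h
      have h0 : (P - Q * ⅟S * Rm).rank = 0 := by omega
      have hz : P - Q * ⅟S * Rm = 0 := by
        have hb : LinearMap.range (P - Q * ⅟S * Rm).mulVecLin = ⊥ :=
          Submodule.finrank_eq_zero.mp h0
        have hf : (P - Q * ⅟S * Rm).mulVecLin = 0 := LinearMap.range_eq_bot.mp hb
        ext i j
        have := congrFun (LinearMap.ext_iff.mp hf (Pi.single j 1)) i
        simpa [Matrix.mulVecLin_apply, Matrix.mulVec_single, Matrix.mul_apply, Matrix.mulVec, dotProduct] using this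
      rw [← hSinv]
      exact sub_eq_zero.mp hz
    · intro h
      have hz : P - Q * ⅟S * Rm = 0 := by rw [hSinv]; exact sub_eq_zero.mpr h
      rw [hz, Matrix.rank_zero, zero_add]
  · rw [hrank]; omega

/-- If the covariance matrix of `X_C` is positive definite, then the block cross-covariance
matrix `[[Σ_{A,B}, Σ_{A,C}], [Σ_{C,B}, Σ_{C,C}]]` between `(X_A, X_C)` and `(X_B, X_C)` has
rank `n_C` iff `Σ_{A,B} = Σ_{A,C} Σ_{C,C}⁻¹ Σ_{C,B}`, and its rank is always at least `n_C`. -/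
theorem rank_block_crossCov_eq_iff_partial_crossCov_zero
    {Ω : Type*} [MeasurableSpace Ω] (μ : Measure Ω) [IsProbabilityMeasure μ]
    {nA nB nC : ℕ}
    (XA : Ω → Fin nA → ℝ) (XB : Ω → Fin nB → ℝ) (XC : Ω → Fin nC → ℝ)
    (hA : ∀ i, MemLp (fun ω => XA ω i) 2 μ)
    (hB : ∀ j, MemLp (fun ω => XB ω j) 2 μ)
    (hC : ∀ k, MemLp (fun ω => XC ω k) 2 μ)
    (hCC : (crossCov μ XC XC).PosDef) :
    ((Matrix.fromBlocks (crossCov μ XA XB) (crossCov μ XA XC)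
        (crossCov μ XC XB) (crossCov μ XC XC)).rank = nC ↔
      crossCov μ XA XB = crossCov μ XA XC * (crossCov μ XC XC)⁻¹ * crossCov μ XC XB) ∧
    nC ≤ (Matrix.fromBlocks (crossCov μ XA XB) (crossCov μ XA XC)
        (crossCov μ XC XB) (crossCov μ XC XC)).rank := by
  exact myRankBlockAux _ _ _ _ hCC
end
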